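/- arXiv:2301.01738 — 2 statements merged into one kernel-verified Lean document; each statement's English description precedes it below -/
import Mathlib

section
/- Let M be a smooth manifold with a q-contact structure given by 1-forms λ₁,…,λ_q and Reeb vector fields R₁,…,R_q satisfying λᵢ(R_j) = δᵢⱼ and ι_{R_j} dλᵢ = 0 for all i,j. Then the Reeb vector fields pairwise commute: [Rᵢ, R_j] = 0 for all i, j. -/
/-!
STATEMENT 0: For a q-contact structure (flat model): 1-forms `lam i` and Reeb
vector fields `R j` with `lam i (R j) = δᵢⱼ`, `ι_{R j} d(lam i) = 0`, and
`ker d(lam i) = span {R j}`, the Reeb fields pairwise commute.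
-/

noncomputable section

variable {E : Type*} [NormedAddCommGroup E] [NormedSpace ℝ E]

/-- Lie bracket of vector fields on a normed space (flat chart model). -/
def lieBracket (X Y : E → E) : E → E :=
  fun x => fderiv ℝ Y x (X x) - fderiv ℝ X x (Y x)

/-- Exterior derivative of a smooth 1-form, evaluated on constant vectors. -/
def extD (ω : E → E →L[ℝ] ℝ) : E → E → E → ℝ :=
  fun x v w => fderiv ℝ (fun p => ω p w) x v - fderiv ℝ (fun p => ω p v) x w

/-- Leibniz rule for applying a CLM-valued map to a varying vector. -/
lemma fd_apply {F : Type*} [NormedAddCommGroup F] [NormedSpace ℝ F]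
    (ω : E → E →L[ℝ] F) (V : E → E) {x : E}
    (hω : DifferentiableAt ℝ ω x) (hV : DifferentiableAt ℝ V x) (u : E) :
    fderiv ℝ (fun p => ω p (V p)) x u = fderiv ℝ ω x u (V x) + ω x (fderiv ℝ V x u) := by
  rw [fderiv_clm_apply hω hV]
  simp [add_comm]

/-- Derivative of applying a CLM-valued map to a constant vector. -/
lemma fd_apply_const {F : Type*} [NormedAddCommGroup F] [NormedSpace ℝ F]
    (ω : E → E →L[ℝ] F) {x : E} (hω : DifferentiableAt ℝ ω x) (w u : E) :
    fderiv ℝ (fun p => ω p w) x u = fderiv ℝ ω x u w := by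
  rw [fderiv_clm_apply hω (differentiableAt_const w)]
  simp

theorem reeb_fields_commute {q : ℕ}
    (lam : Fin q → E → E →L[ℝ] ℝ) (R : Fin q → E → E)
    (hlam : ∀ i, ContDiff ℝ (⊤ : ℕ∞) (lam i)) (hRsm : ∀ j, ContDiff ℝ (⊤ : ℕ∞) (R j))
    (hdual : ∀ i j, ∀ x : E, lam i x (R j x) = if i = j then 1 else 0)
    (hcontr : ∀ i j, ∀ x v : E, extD (lam i) x (R j x) v = 0)
    (hker : ∀ i (x : E) (v : E), (∀ w, extD (lam i) x v w = 0) →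
      v ∈ Submodule.span ℝ (Set.range fun j => R j x)) :
    ∀ i j, ∀ x : E, lieBracket (R i) (R j) x = 0 := by
  intro i j x
  have hlamD : ∀ k, Differentiable ℝ (lam k) := fun k => (hlam k).differentiable (by simp)
  have hRD : ∀ m, Differentiable ℝ (R m) := fun m => (hRsm m).differentiable (by simp)
  have hΦ : ∀ k, Differentiable ℝ (fderiv ℝ (lam k)) :=
    fun k => (ContDiff.fderiv_right (m := 1) (hlam k) (WithTop.coe_le_coe.mpr le_top)).differentiable one_ne_zero
  have hC : ∀ m, Differentiable ℝ (fderiv ℝ (R m)) :=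
    fun m => (ContDiff.fderiv_right (m := 1) (hRsm m) (WithTop.coe_le_coe.mpr le_top)).differentiable one_ne_zero
  have hsymΛ : ∀ k (u v : E), fderiv ℝ (fderiv ℝ (lam k)) x u v
      = fderiv ℝ (fderiv ℝ (lam k)) x v u :=
    fun k => (hlam k).contDiffAt.isSymmSndFDerivAt (by rw [minSmoothness_of_isRCLikeNormedField]; exact WithTop.coe_le_coe.mpr le_top)
  have hsymR : ∀ m (u v : E), fderiv ℝ (fderiv ℝ (R m)) x u v
      = fderiv ℝ (fderiv ℝ (R m)) x v u :=
    fun m => (hRsm m).contDiffAt.isSymmSndFDerivAt (by rw [minSmoothness_of_isRCLikeNormedField]; exact WithTop.coe_le_coe.mpr le_top)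
  -- F1 : differentiated duality  (λₖ(Rₘ) is constant)
  have F1 : ∀ (k m : Fin q) (p u : E),
      fderiv ℝ (lam k) p u (R m p) + lam k p (fderiv ℝ (R m) p u) = 0 := by
    intro k m p u
    have hconst : (fun p => lam k p (R m p)) = fun _ : E => (if k = m then (1:ℝ) else 0) :=
      funext fun p => hdual k m p
    have h0 : fderiv ℝ (fun p => lam k p (R m p)) p = 0 := by
      rw [hconst]; exact fderiv_const_apply _
    have h := (fd_apply (lam k) (R m) (hlamD k p) (hRD m p) u).symm
    rw [h, h0]
    simp
  -- F2 : contraction identity, rewritten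
  have F2 : ∀ (k m : Fin q) (p w : E),
      fderiv ℝ (lam k) p (R m p) w = fderiv ℝ (lam k) p w (R m p) := by
    intro k m p w
    have h := hcontr k m p w
    simp only [extD] at h
    rw [fd_apply_const (lam k) (hlamD k p) w (R m p),
        fd_apply_const (lam k) (hlamD k p) (R m p) w] at h
    linarith
  -- Part 1 : λₖ([Rᵢ,Rⱼ]) = 0 pointwise (as equality of the two halves)
  have P1 : ∀ (k : Fin q) (p : E),
      lam k p (fderiv ℝ (R j) p (R i p)) = lam k p (fderiv ℝ (R i) p (R j p)) := by
    intro k p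
    have h1 := F1 k j p (R i p)
    have h2 := F1 k i p (R j p)
    have h3 := F2 k i p (R j p)
    linarith
  -- F3 : derivative of F1 at x
  have F3 : ∀ (k m : Fin q) (u v : E),
      fderiv ℝ (fderiv ℝ (lam k)) x v u (R m x)
      + fderiv ℝ (lam k) x u (fderiv ℝ (R m) x v)
      + fderiv ℝ (lam k) x v (fderiv ℝ (R m) x u)
      + lam k x (fderiv ℝ (fderiv ℝ (R m)) x v u) = 0 := by
    intro k m u v
    have h_eq : (fun p => fderiv ℝ (lam k) p u (R m p))
        = fun p => -(lam k p (fderiv ℝ (R m) p u)) := by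
      funext p
      have := F1 k m p u
      linarith
    have hB : DifferentiableAt ℝ (fun p => fderiv ℝ (lam k) p u) x :=
      (hΦ k x).clm_apply (differentiableAt_const u)
    have e1 := fd_apply (ω := fun p => fderiv ℝ (lam k) p u) (V := R m) hB (hRD m x) v
    rw [fd_apply_const (ω := fderiv ℝ (lam k)) (hΦ k x) u v] at e1
    have hCu : DifferentiableAt ℝ (fun p => fderiv ℝ (R m) p u) x :=
      (hC m x).clm_apply (differentiableAt_const u)
    have e2 := fd_apply (ω := lam k) (V := fun p => fderiv ℝ (R m) p u)
      (hlamD k x) hCu v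
    rw [fd_apply_const (ω := fderiv ℝ (R m)) (hC m x) u v] at e2
    have hd : fderiv ℝ (fun p => fderiv ℝ (lam k) p u (R m p)) x v
        = fderiv ℝ (fun p => -(lam k p (fderiv ℝ (R m) p u))) x v := by rw [h_eq]
    rw [fderiv_fun_neg] at hd
    simp only [ContinuousLinearMap.neg_apply] at hd
    rw [e1, e2] at hd
    linarith
  -- F4 : derivative of F2 at x
  have F4 : ∀ (k m : Fin q) (u w : E),
      fderiv ℝ (fderiv ℝ (lam k)) x u (R m x) w
      + fderiv ℝ (lam k) x (fderiv ℝ (R m) x u) w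
      = fderiv ℝ (fderiv ℝ (lam k)) x u w (R m x)
      + fderiv ℝ (lam k) x w (fderiv ℝ (R m) x u) := by
    intro k m u w
    have h_eq : (fun p => fderiv ℝ (lam k) p (R m p) w)
        = fun p => fderiv ℝ (lam k) p w (R m p) := funext fun p => F2 k m p w
    have hs : DifferentiableAt ℝ (fun p => fderiv ℝ (lam k) p (R m p)) x :=
      (hΦ k x).clm_apply (hRD m x)
    have l1 := fd_apply_const (ω := fun p => fderiv ℝ (lam k) p (R m p)) hs w u
    rw [fd_apply (ω := fderiv ℝ (lam k)) (V := R m) (hΦ k x) (hRD m x) u] at l1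
    simp only [ContinuousLinearMap.add_apply] at l1
    have hB : DifferentiableAt ℝ (fun p => fderiv ℝ (lam k) p w) x :=
      (hΦ k x).clm_apply (differentiableAt_const w)
    have r1 := fd_apply (ω := fun p => fderiv ℝ (lam k) p w) (V := R m) hB (hRD m x) u
    rw [fd_apply_const (ω := fderiv ℝ (lam k)) (hΦ k x) w u] at r1
    have hd : fderiv ℝ (fun p => fderiv ℝ (lam k) p (R m p) w) x u
        = fderiv ℝ (fun p => fderiv ℝ (lam k) p w (R m p)) x u := by rw [h_eq]
    rw [l1, r1] at hd
    linarith
  -- P1' : derivative of P1 at x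
  have P1' : ∀ (k : Fin q) (w : E),
      fderiv ℝ (lam k) x w (fderiv ℝ (R j) x (R i x))
      + lam k x (fderiv ℝ (fderiv ℝ (R j)) x w (R i x))
      + lam k x (fderiv ℝ (R j) x (fderiv ℝ (R i) x w))
      = fderiv ℝ (lam k) x w (fderiv ℝ (R i) x (R j x))
      + lam k x (fderiv ℝ (fderiv ℝ (R i)) x w (R j x))
      + lam k x (fderiv ℝ (R i) x (fderiv ℝ (R j) x w)) := by
    intro k w
    have h_eq : (fun p => lam k p (fderiv ℝ (R j) p (R i p)))
        = fun p => lam k p (fderiv ℝ (R i) p (R j p)) := funext fun p => P1 k p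
    have hV1 : DifferentiableAt ℝ (fun p => fderiv ℝ (R j) p (R i p)) x :=
      (hC j x).clm_apply (hRD i x)
    have hV2 : DifferentiableAt ℝ (fun p => fderiv ℝ (R i) p (R j p)) x :=
      (hC i x).clm_apply (hRD j x)
    have l1 := fd_apply (ω := lam k) (V := fun p => fderiv ℝ (R j) p (R i p))
      (hlamD k x) hV1 w
    rw [fd_apply (ω := fderiv ℝ (R j)) (V := R i) (hC j x) (hRD i x) w] at l1
    have r1 := fd_apply (ω := lam k) (V := fun p => fderiv ℝ (R i) p (R j p))
      (hlamD k x) hV2 w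
    rw [fd_apply (ω := fderiv ℝ (R i)) (V := R j) (hC i x) (hRD j x) w] at r1
    have hd : fderiv ℝ (fun p => lam k p (fderiv ℝ (R j) p (R i p))) x w
        = fderiv ℝ (fun p => lam k p (fderiv ℝ (R i) p (R j p))) x w := by rw [h_eq]
    rw [l1, r1] at hd
    simp only [map_add] at hd
    linarith
  -- the candidate bracket vector
  set a1 := fderiv ℝ (R j) x (R i x) with ha1
  set a2 := fderiv ℝ (R i) x (R j x) with ha2
  -- Part 2 : the bracket is in the kernel of each dλₖ
  have key : ∀ (k : Fin q) (w : E), extD (lam k) x (a1 - a2) w = 0 := by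
    intro k w
    simp only [extD]
    rw [fd_apply_const (lam k) (hlamD k x) w (a1 - a2),
        fd_apply_const (lam k) (hlamD k x) (a1 - a2) w]
    have m1 : fderiv ℝ (lam k) x (a1 - a2) w
        = fderiv ℝ (lam k) x a1 w - fderiv ℝ (lam k) x a2 w := by
      rw [map_sub]; rfl
    have m2 : fderiv ℝ (lam k) x w (a1 - a2)
        = fderiv ℝ (lam k) x w a1 - fderiv ℝ (lam k) x w a2 := map_sub _ _ _
    rw [m1, m2]
    have f4j := F4 k j (R i x) w
    have f4i := F4 k i (R j x) w
    have hsD := hsymΛ k (R i x) (R j x)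
    have hsDw : fderiv ℝ (fderiv ℝ (lam k)) x (R i x) (R j x) w
        = fderiv ℝ (fderiv ℝ (lam k)) x (R j x) (R i x) w := by rw [hsD]
    have f3j := F3 k j w (R i x)
    have f3i := F3 k i w (R j x)
    have e1 := F2 k i x (fderiv ℝ (R j) x w)
    have e1' := F1 k i x (fderiv ℝ (R j) x w)
    have e2 := F2 k j x (fderiv ℝ (R i) x w)
    have e2' := F1 k j x (fderiv ℝ (R i) x w)
    have hs1 : lam k x (fderiv ℝ (fderiv ℝ (R j)) x (R i x) w)
        = lam k x (fderiv ℝ (fderiv ℝ (R j)) x w (R i x)) := by rw [hsymR j (R i x) w]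
    have hs2 : lam k x (fderiv ℝ (fderiv ℝ (R i)) x (R j x) w)
        = lam k x (fderiv ℝ (fderiv ℝ (R i)) x w (R j x)) := by rw [hsymR i (R j x) w]
    have p1' := P1' k w
    linarith
  -- membership in the span of the Reeb fields
  have hmem := hker i x (a1 - a2) (key i)
  rw [Submodule.mem_span_range_iff_exists_fun] at hmem
  obtain ⟨c, hc⟩ := hmem
  have hck : ∀ k, c k = 0 := by
    intro k
    have h1 : lam k x (∑ m, c m • R m x) = c k := by
      rw [map_sum]
      simp only [map_smul, hdual, smul_eq_mul, mul_ite, mul_one, mul_zero]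
      simp
    rw [hc] at h1
    have h2 : lam k x (a1 - a2) = 0 := by
      rw [map_sub]
      have := P1 k x
      rw [← ha1, ← ha2] at this
      linarith
    rw [h2] at h1
    exact h1.symm
  have hb0 : a1 - a2 = 0 := by
    rw [← hc]
    simp [hck]
  simp only [lieBracket]
  rw [← ha1, ← ha2]
  exact hb0

end
end

section
/- Let λ₁,…,λ_q be the adapted coframe of a uniform q-contact structure on M, i.e., dλᵢ = dλ_q for all i. Then each 1-form λᵢ − λ_q is closed, and if additionally M is closed and λ = λ₁∧…∧λ_q ∧ (dλ₁)ⁿ is a volume form, then λᵢ − λ_q is not exact for i < q. -/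
/-!
STATEMENT 19: For a uniform q-contact adapted coframe `λ₁, …, λ_q`
(`dλᵢ = dλ_q` for all `i`) on a closed manifold `M` (compact, boundaryless,
carrying the Reeb fields `R j` with `λᵢ(R j) = δᵢⱼ`), each 1-form
`λᵢ − λ_q` is closed, and it is not exact for `i ≠ q`: there is no smooth
`f : M → ℝ` with `λᵢ − λ_q = df`.
-/

open scoped Manifold

/-- On a compact boundaryless manifold, the differential of a smooth real
function vanishes at a maximum point. -/
theorem aux_mfderiv_zero_at_max
    {E H M : Type*} [NormedAddCommGroup E] [NormedSpace ℝ E]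
    [TopologicalSpace H] {I : ModelWithCorners ℝ E H} [I.Boundaryless]
    [TopologicalSpace M] [ChartedSpace H M] [IsManifold I (⊤ : ℕ∞) M]
    [CompactSpace M] [Nonempty M]
    (f : M → ℝ) (hf : ContMDiff I 𝓘(ℝ, ℝ) (⊤ : ℕ∞) f) :
    ∃ x : M, mfderiv I 𝓘(ℝ, ℝ) f x = 0 := by
  obtain ⟨x₀, -, hx₀⟩ :=
    isCompact_univ.exists_isMaxOn Set.univ_nonempty (hf.continuous.continuousOn)
  refine ⟨x₀, ?_⟩
  set g : E → ℝ := f ∘ (extChartAt I x₀).symm with hg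
  have hmax : IsLocalMax g (extChartAt I x₀ x₀) := by
    filter_upwards with y
    calc g y = f ((extChartAt I x₀).symm y) := rfl
    _ ≤ f x₀ := hx₀ trivial
    _ = g (extChartAt I x₀ x₀) := by
        simp [hg, (extChartAt I x₀).left_inv (mem_extChartAt_source x₀)]
  have hfd : fderiv ℝ g (extChartAt I x₀ x₀) = 0 := hmax.fderiv_eq_zero
  have hdiff : MDifferentiableAt I 𝓘(ℝ, ℝ) f x₀ := (hf x₀).mdifferentiableAt (by simp)
  have := hdiff.mfderiv
  rw [this]
  have hw : writtenInExtChartAt I 𝓘(ℝ, ℝ) x₀ f = g := by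
    ext y; simp [writtenInExtChartAt, hg, chartAt_self_eq]
  rw [hw, I.range_eq_univ, fderivWithin_univ, hfd]
  rfl
theorem uniform_coframe_closed_not_exact
    {E H M : Type*} [NormedAddCommGroup E] [NormedSpace ℝ E]
    [TopologicalSpace H] {I : ModelWithCorners ℝ E H} [I.Boundaryless]
    [TopologicalSpace M] [ChartedSpace H M] [IsManifold I (⊤ : ℕ∞) M]
    [CompactSpace M] [Nonempty M]
    {q : ℕ} (lam : Fin q → M → E →L[ℝ] ℝ) (R : Fin q → M → E)
    -- an exterior derivative operator on 1-forms:
    (d : (M → E →L[ℝ] ℝ) → (M → E →L[ℝ] E →L[ℝ] ℝ))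
    (hd : IsLinearMap ℝ d)
    -- uniformity: dλᵢ = dλⱼ for all i, j:
    (huniform : ∀ i j, d (lam i) = d (lam j))
    -- the Reeb fields of the adapted coframe: λᵢ(R j) = δᵢⱼ:
    (hdual : ∀ i j, ∀ x : M, lam i x (R j x) = if i = j then 1 else 0)
    (i j : Fin q) (hij : i ≠ j) :
    -- λᵢ − λⱼ is closed:
    d (lam i - lam j) = 0 ∧
    -- λᵢ − λⱼ is not exact:
    ¬ ∃ f : M → ℝ, ContMDiff I 𝓘(ℝ, ℝ) (⊤ : ℕ∞) f ∧
        ∀ x : M, lam i x - lam j x = mfderiv I 𝓘(ℝ, ℝ) f x := by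
  constructor
  · have hsub := map_sub (IsLinearMap.mk' d hd) (lam i) (lam j)
    simp only [IsLinearMap.mk'_apply] at hsub
    rw [hsub, huniform i j]
    exact sub_self (d (lam j))
  · rintro ⟨f, hf, hdf⟩
    obtain ⟨x, hx⟩ := aux_mfderiv_zero_at_max f hf
    have h1 := hdf x
    rw [hx] at h1
    have h2 : (lam i x - lam j x) (R i x) = 0 := by rw [h1]; rfl
    rw [ContinuousLinearMap.sub_apply, hdual i i x, hdual j i x] at h2
    simp [hij.symm] at h2
end
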